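/- No purely imaginary eigenvalues beyond the simple zero at a = 1 (Proposition 3.4). Let A(a) be the normalized N-cycle matrix defined in the context, and assume (−1)^{N_aut} = β and Σ_{m=1}^N 1/α_m ≠ 0. Then: (a) 0 is an algebraically simple root of the characteristic polynomial of A(1), and A(1) has no other eigenvalue with zero real part (in particular no nonzero purely imaginary eigenvalue); (b) for every real a > 1, the matrix A(a) has no eigenvalue with zero real part. -/

import Mathlib

open scoped BigOperators

/-- The normalized `N`-cycle matrix `A(a)`: diagonal entries `-a·α m`,
sub-diagonal entries `1`, corner entry `A 0 (N-1) = β`; all other entries `0`. -/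
noncomputable def Acyc (N : ℕ) (α : Fin N → ℝ) (β : ℝ) (a : ℝ) :
    Matrix (Fin N) (Fin N) ℝ :=
  Matrix.of fun i j =>
    if j = i then -(a * α i)
    else if ((j : ℕ) + 1) % N = (i : ℕ) then (if (i : ℕ) = 0 then β else 1) else 0

/-- The eigenvalues of a real matrix: roots in `ℂ` of its characteristic
polynomial, counted with algebraic multiplicity. -/
noncomputable def specC {N : ℕ} (A : Matrix (Fin N) (Fin N) ℝ) : Multiset ℂ :=
  (Matrix.charpoly (A.map (algebraMap ℝ ℂ))).roots

/-- `μ(A)`: the number of eigenvalues of `A` with strictly positive real part,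
counted with algebraic multiplicity. -/
noncomputable def muM {N : ℕ} (A : Matrix (Fin N) (Fin N) ℝ) : ℕ :=
  Multiset.card ((specC A).filter fun z => 0 < z.re)

/-- `N_aut`: the number of indices `m` with `α m < 0`. -/
noncomputable def NautOf {N : ℕ} (α : Fin N → ℝ) : ℕ :=
  (Finset.univ.filter fun m => α m < 0).card

/-!
Only the identity and the full rotation contribute to the determinant of a matrix supported on the
diagonal and the cyclic subdiagonal, so the characteristic polynomial of `A(a)` is
`∏ m, (X + a α m) - β`. For an eigenvalue `z` with `z.re = 0`, each factor satisfies
`|a α m| ≤ ‖z + a α m‖`, strictly unless `z = 0`; since the product of the factors is `β` and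
`∏ m, |α m| = 1`, this gives `a ^ N ≤ 1`, hence `a = 1` and `z = 0`. The parity hypothesis says
`∏ m, α m = β`, so `0` is an eigenvalue of `A(1)`, and it is simple because the derivative of the
characteristic polynomial at `0` is `(∏ m, α m) * ∑ m, (α m)⁻¹ ≠ 0`.
-/

open Polynomial Finset

theorem Finset.prod_eq_neg_one_pow_card_filter_neg_mul_prod_abs {ι R : Type*} [CommRing R]
    [LinearOrder R] [IsStrictOrderedRing R] (s : Finset ι) (f : ι → R) :
    ∏ i ∈ s, f i = (-1) ^ #{i ∈ s | f i < 0} * ∏ i ∈ s, |f i| := by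
  calc ∏ i ∈ s, f i = ∏ i ∈ s, (if f i < 0 then -1 else 1) * |f i| := by
        refine prod_congr rfl fun i _ => ?_
        split_ifs with h
        · simp [abs_of_neg h]
        · simp [abs_of_nonneg (not_lt.1 h)]
    _ = _ := by rw [prod_mul_distrib, prod_ite, prod_const, prod_const_one, mul_one]

theorem Complex.sq_norm_add_ofReal {z : ℂ} (hz : z.re = 0) (c : ℝ) :
    ‖z + c‖ ^ 2 = c ^ 2 + ‖z‖ ^ 2 := by
  rw [Complex.sq_norm, Complex.sq_norm, Complex.normSq_apply, Complex.normSq_apply]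
  simp [hz, sq]

theorem Complex.abs_le_norm_add_ofReal {z : ℂ} (hz : z.re = 0) (c : ℝ) : |c| ≤ ‖z + c‖ :=
  (sq_le_sq₀ (abs_nonneg c) (norm_nonneg _)).1 <| by
    rw [sq_abs, sq_norm_add_ofReal hz]; nlinarith [sq_nonneg ‖z‖]

theorem Complex.abs_lt_norm_add_ofReal {z : ℂ} (hz : z.re = 0) (hz₀ : z ≠ 0) (c : ℝ) :
    |c| < ‖z + c‖ :=
  (sq_lt_sq₀ (abs_nonneg c) (norm_nonneg _)).1 <| by
    rw [sq_abs, sq_norm_add_ofReal hz]; have := norm_pos_iff.2 hz₀; nlinarith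

theorem ne_zero_of_prod_abs_eq_one {ι : Type*} [Fintype ι] {c : ι → ℝ} (hc : ∏ i, |c i| = 1)
    (i : ι) : c i ≠ 0 :=
  abs_ne_zero.1 (prod_ne_zero_iff.1 (hc ▸ one_ne_zero) i (mem_univ i))

theorem eq_zero_and_eq_one_of_norm_prod_add_ofReal_eq_one {ι : Type*} [Fintype ι] [Nonempty ι]
    {c : ι → ℝ} (hc : ∏ i, |c i| = 1) {a : ℝ} (ha : 1 ≤ a) {z : ℂ} (hz : z.re = 0)
    (h : ‖∏ i, (z + (a * c i : ℝ))‖ = 1) : z = 0 ∧ a = 1 := by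
  have ha₀ : 0 < a := zero_lt_one.trans_le ha
  have hlow : ∏ i, |a * c i| = a ^ Fintype.card ι := by
    simp [abs_mul, prod_mul_distrib, hc, abs_of_pos ha₀]
  rw [norm_prod] at h
  have ha₁ : a = 1 := by
    have : a ^ Fintype.card ι ≤ 1 := hlow ▸ h ▸
      prod_le_prod (fun i _ => abs_nonneg _) fun i _ => Complex.abs_le_norm_add_ofReal hz _
    exact le_antisymm ((pow_le_one_iff_of_nonneg ha₀.le Fintype.card_ne_zero).1 this) ha
  refine ⟨by_contra fun hz₀ => ?_, ha₁⟩
  have := prod_lt_prod_of_nonempty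
    (fun i _ => abs_pos.2 (mul_ne_zero ha₀.ne' (ne_zero_of_prod_abs_eq_one hc i)))
    (fun i _ => Complex.abs_lt_norm_add_ofReal hz hz₀ _) univ_nonempty
  rw [hlow, h, ha₁, one_pow] at this
  exact lt_irrefl _ this

theorem Polynomial.eval_zero_derivative_prod_X_add_C {K ι : Type*} [Field K] (s : Finset ι)
    {c : ι → K} (hc : ∀ i ∈ s, c i ≠ 0) :
    (derivative (∏ i ∈ s, (X + C (c i)))).eval 0 = (∏ i ∈ s, c i) * ∑ i ∈ s, (c i)⁻¹ := by
  classical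
  rw [derivative_prod_finset, eval_finsetSum, mul_sum]
  refine sum_congr rfl fun i hi => ?_
  rw [eq_mul_inv_iff_mul_eq₀ (hc i hi), ← prod_erase_mul _ _ hi]
  simp [eval_prod]

theorem Polynomial.rootMultiplicity_zero_prod_X_add_C_sub_C_prod {K ι : Type*} [Field K]
    [Fintype ι] {c : ι → K} (hc : ∀ i, c i ≠ 0) (hsum : ∑ i, (c i)⁻¹ ≠ 0) :
    rootMultiplicity 0 (∏ i, (X + C (c i)) - C (∏ i, c i)) = 1 := by
  set p := ∏ i, (X + C (c i)) - C (∏ i, c i)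
  have hroot : p.IsRoot 0 := by simp [p, eval_prod]
  have hder : ¬(derivative p).IsRoot 0 := by
    rw [IsRoot, derivative_sub, derivative_C, sub_zero,
      eval_zero_derivative_prod_X_add_C _ fun i _ => hc i]
    exact mul_ne_zero (prod_ne_zero_iff.2 fun i _ => hc i) hsum
  have hp : p ≠ 0 := fun h => hder (by simp [h])
  have hpos := (rootMultiplicity_pos hp).2 hroot
  have hle := (one_lt_rootMultiplicity_iff_isRoot hp).not.2 fun h => hder h.2
  omega

theorem Equiv.Perm.eq_one_or_eq_finRotate {n : ℕ} (σ : Equiv.Perm (Fin (n + 2)))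
    (h : ∀ i, σ i = i ∨ σ i = i + 1) : σ = 1 ∨ σ = finRotate (n + 2) := by
  have hno : ∀ i : Fin (n + 2), σ (i + 1) = i + 1 → σ i ≠ i + 1 := fun i h1 h2 =>
    (by simp : i + 1 ≠ i) (σ.injective (h2.trans h1.symm)).symm
  by_cases hlast : σ (Fin.last _) = Fin.last _ + 1
  · suffices ∀ i, σ i = i + 1 from .inr <| Equiv.ext fun i => by simp [this, finRotate_apply]
    refine Fin.induction ?_ fun i ih => ?_
    · rw [← Fin.last_add_one]
      exact (h _).resolve_left fun h1 => hno _ h1 hlast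
    · rw [← Fin.coeSucc_eq_succ]
      exact (h _).resolve_left fun h1 => hno _ h1 ih
  · suffices ∀ i, σ i = i from .inl <| Equiv.ext this
    refine Fin.reverseInduction ((h _).resolve_right hlast) fun i ih => ?_
    rw [← Fin.coeSucc_eq_succ] at ih
    exact (h _).resolve_right (hno _ ih)

theorem Matrix.det_of_eq_zero_off_cyclic_bidiagonal {R : Type*} [CommRing R] {n : ℕ}
    (M : Matrix (Fin (n + 2)) (Fin (n + 2)) R) (hM : ∀ i j, j ≠ i → j ≠ i + 1 → M j i = 0) :
    M.det = ∏ i, M i i + (-1) ^ (n + 1) * ∏ i, M (i + 1) i := by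
  have hne : (1 : Equiv.Perm (Fin (n + 2))) ≠ finRotate (n + 2) := fun h => by
    simpa [finRotate_apply] using congr($h 0)
  rw [det_apply, ← sum_subset (subset_univ {1, finRotate (n + 2)})]
  · simp [sum_pair hne, sign_finRotate, finRotate_apply, Units.smul_def]
  · intro σ _ hσ
    obtain ⟨i, hi, hi'⟩ : ∃ i, σ i ≠ i ∧ σ i ≠ i + 1 := by
      by_contra! h
      exact hσ (by simpa using σ.eq_one_or_eq_finRotate fun i => or_iff_not_imp_left.2 (h i))
    rw [prod_eq_zero (f := fun i => M (σ i) i) (mem_univ i) (hM i (σ i) hi hi'), smul_zero]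

theorem Fin.val_add_one_eq_mod {n : ℕ} (i : Fin (n + 2)) :
    ((i + 1 : Fin (n + 2)) : ℕ) = ((i : ℕ) + 1) % (n + 2) := by
  simp [Fin.val_add]

theorem Acyc_apply_self (N : ℕ) (α : Fin N → ℝ) (β a : ℝ) (i : Fin N) :
    Acyc N α β a i i = -(a * α i) := by
  simp [Acyc]

theorem Acyc_apply_add_one_self {n : ℕ} (α : Fin (n + 2) → ℝ) (β a : ℝ) (i : Fin (n + 2)) :
    Acyc (n + 2) α β a (i + 1) i = if i + 1 = 0 then β else 1 := by
  rw [Acyc, Matrix.of_apply, if_neg (by simp), ← Fin.val_add_one_eq_mod, if_pos rfl]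
  simp only [Fin.val_eq_zero_iff]

theorem Acyc_apply_of_ne {n : ℕ} (α : Fin (n + 2) → ℝ) (β a : ℝ) {i j : Fin (n + 2)}
    (hji : j ≠ i) (hji' : j ≠ i + 1) : Acyc (n + 2) α β a j i = 0 := by
  rw [Acyc, Matrix.of_apply, if_neg hji.symm, ← Fin.val_add_one_eq_mod,
    if_neg (Fin.val_ne_of_ne hji'.symm)]

theorem charpoly_Acyc {n : ℕ} (α : Fin (n + 2) → ℝ) (β a : ℝ) :
    (Acyc (n + 2) α β a).charpoly = ∏ i, (X + C (a * α i)) - C β := by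
  rw [Matrix.charpoly, Matrix.det_of_eq_zero_off_cyclic_bidiagonal]
  · have hdiag : ∀ i, (Acyc (n + 2) α β a).charmatrix i i = X + C (a * α i) := fun i => by
      rw [Matrix.charmatrix_apply_eq, Acyc_apply_self, map_neg, sub_neg_eq_add]
    have hsub : ∏ i, (Acyc (n + 2) α β a).charmatrix (i + 1) i = (-1) ^ (n + 2) * C β := by
      calc ∏ i, (Acyc (n + 2) α β a).charmatrix (i + 1) i
          = ∏ i : Fin (n + 2), -1 * C (if i + 1 = 0 then β else 1) := prod_congr rfl fun i _ => by
            rw [Matrix.charmatrix_apply_ne _ _ _ (by simp), Acyc_apply_add_one_self, neg_one_mul]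
        _ = (-1) ^ (n + 2) * C β := by
            rw [prod_mul_distrib, prod_const, card_univ, Fintype.card_fin, ← map_prod]
            simp [add_eq_zero_iff_eq_neg]
    rw [hsub, ← mul_assoc, ← pow_add, Odd.neg_one_pow ⟨n + 1, by ring⟩, neg_one_mul,
      ← sub_eq_add_neg]
    simp only [hdiag]
  · intro i j hji hji'
    rw [Matrix.charmatrix_apply_ne _ _ _ hji, Acyc_apply_of_ne α β a hji hji', map_zero, neg_zero]

theorem charpoly_map_Acyc {n : ℕ} (α : Fin (n + 2) → ℝ) (β a : ℝ) :
    ((Acyc (n + 2) α β a).map (algebraMap ℝ ℂ)).charpoly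
      = ∏ i, (X + C ((a * α i : ℝ) : ℂ)) - C (β : ℂ) := by
  rw [Matrix.charpoly_map, charpoly_Acyc]
  simp [Polynomial.map_prod]

theorem mem_specC_Acyc_iff {n : ℕ} (α : Fin (n + 2) → ℝ) (β a : ℝ) (z : ℂ) :
    z ∈ specC (Acyc (n + 2) α β a) ↔ ∏ i, (z + (a * α i : ℝ)) = β := by
  rw [specC, mem_roots (Matrix.charpoly_monic _).ne_zero, charpoly_map_Acyc, IsRoot, eval_sub,
    eval_prod, sub_eq_zero]
  simp

theorem no_imaginary_eigenvalues_beyond_one_general (N : ℕ) (hN : 3 ≤ N)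
    (α : Fin N → ℝ) (hprod : ∏ m : Fin N, |α m| = 1)
    (b : ℤ) (hpar : (-1 : ℤ) ^ (NautOf α) = b)
    (hsum : ∑ m : Fin N, (α m)⁻¹ ≠ 0) :
    (Polynomial.rootMultiplicity (0 : ℂ)
        (Matrix.charpoly ((Acyc N α (b : ℝ) 1).map (algebraMap ℝ ℂ))) = 1 ∧
      ∀ z ∈ specC (Acyc N α (b : ℝ) 1), z.re = 0 → z = 0) ∧
    (∀ a : ℝ, 1 < a → ∀ z ∈ specC (Acyc N α (b : ℝ) a), z.re ≠ 0) := by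
  obtain ⟨n, rfl⟩ : ∃ n, N = n + 2 := ⟨N - 2, by omega⟩
  have hprodα : ∏ m, α m = b := by
    rw [prod_eq_neg_one_pow_card_filter_neg_mul_prod_abs, hprod, mul_one, ← hpar]
    simp [NautOf]
  have himag : ∀ a, 1 ≤ a → ∀ z ∈ specC (Acyc (n + 2) α b a), z.re = 0 → z = 0 ∧ a = 1 :=
    fun a ha z hz hre => eq_zero_and_eq_one_of_norm_prod_add_ofReal_eq_one hprod ha hre <| by
      rw [(mem_specC_Acyc_iff α b a z).1 hz, ← hpar]
      simp
  refine ⟨⟨?_, fun z hz hre => (himag 1 le_rfl z hz hre).1⟩,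
    fun a ha z hz hre => ha.ne' (himag a ha.le z hz hre).2⟩
  have hb : ((b : ℝ) : ℂ) = ∏ i, ((1 * α i : ℝ) : ℂ) := by simp [← hprodα]
  rw [charpoly_map_Acyc, hb]
  refine rootMultiplicity_zero_prod_X_add_C_sub_C_prod
    (fun i => by simpa using ne_zero_of_prod_abs_eq_one hprod i) ?_
  simp only [one_mul]
  exact_mod_cast hsum

/-- **No purely imaginary eigenvalues beyond the simple zero at `a = 1`
(Proposition 3.4).** If `(−1)^{N_aut} = β` and `Σ_m 1/α_m ≠ 0`, then (a) `0` is
an algebraically simple root of the characteristic polynomial of `A(1)` and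
`A(1)` has no other eigenvalue with zero real part; (b) for every `a > 1`, the
matrix `A(a)` has no eigenvalue with zero real part. -/
theorem no_imaginary_eigenvalues_beyond_one (N : ℕ) (hN : 3 ≤ N)
    (α : Fin N → ℝ) (hα : ∀ m, α m ≠ 0) (hprod : ∏ m : Fin N, |α m| = 1)
    (b : ℤ) (hb : b = 1 ∨ b = -1) (hpar : (-1 : ℤ) ^ (NautOf α) = b)
    (hsum : ∑ m : Fin N, (α m)⁻¹ ≠ 0) :
    (Polynomial.rootMultiplicity (0 : ℂ)
        (Matrix.charpoly ((Acyc N α (b : ℝ) 1).map (algebraMap ℝ ℂ))) = 1 ∧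
      ∀ z ∈ specC (Acyc N α (b : ℝ) 1), z.re = 0 → z = 0) ∧
    (∀ a : ℝ, 1 < a → ∀ z ∈ specC (Acyc N α (b : ℝ) a), z.re ≠ 0) :=
  no_imaginary_eigenvalues_beyond_one_general N hN α hprod b hpar hsum
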